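/- Let 𝕋(7,4,2) be the group presented by generators c₁, c₂, c₃ subject to the relations c₁⁷ = c₂⁴ = c₃² = c₁c₂c₃ = 1. Then there exists a surjective group homomorphism φ : 𝕋(7,4,2) → PSL(2,7) such that orderOf φ(c₁) = 7, orderOf φ(c₂) = 4, and orderOf φ(c₃) = 2. -/

import Mathlib

/-!
`SL(2, 𝔽₇)` is generated by the two elementary transvections, so by `u = [[1,1],[0,1]]` together
with any `y` conjugating `u` into a lower triangular matrix. Choosing `y` with trace `3`
(a square root of `2`) and `tr (u y) = 0` makes `y ^ 4 = (u y) ^ 2 = -1`, so in `PSL(2,7)` the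
classes of `u`, `y` and `(u y)⁻¹` have orders `7, 4, 2`, multiply to `1`, and generate.
-/

/-- The relators of the polygonal group `𝕋(7,4,2)`:
`c₁⁷, c₂⁴, c₃², c₁c₂c₃`. -/
def rels742 : Set (FreeGroup (Fin 3)) :=
  {FreeGroup.of 0 ^ 7, FreeGroup.of 1 ^ 4, FreeGroup.of 2 ^ 2,
    FreeGroup.of 0 * FreeGroup.of 1 * FreeGroup.of 2}

/-- The polygonal group `𝕋(7,4,2) = ⟨c₁,c₂,c₃ ∣ c₁⁷ = c₂⁴ = c₃² = c₁c₂c₃ = 1⟩`. -/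
abbrev T742 : Type := PresentedGroup rels742

/-- `PSL(2,7)`: the quotient of `SL(2, ℤ/7ℤ)` by its center. -/
abbrev PSL27 :=
  Matrix.SpecialLinearGroup (Fin 2) (ZMod 7) ⧸
    Subgroup.center (Matrix.SpecialLinearGroup (Fin 2) (ZMod 7))

open Matrix
open scoped MatrixGroups

namespace Matrix.SpecialLinearGroup

variable {ι F : Type*} [DecidableEq ι] [Fintype ι] [CommRing F]

lemma transvection_natCast {i j : ι} (hij : i ≠ j) (n : ℕ) :
    transvection hij (n : F) = transvection hij 1 ^ n := by
  induction n with
  | zero => simp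
  | succ n ih => rw [Nat.cast_succ, transvection_add, ih, pow_succ]

lemma apply_eq_zero_of_mem_center {A : SpecialLinearGroup ι F}
    (hA : A ∈ Subgroup.center (SpecialLinearGroup ι F)) {i j : ι} (hij : i ≠ j) : A i j = 0 := by
  rw [← scalar_eq_self_of_mem_center hA i]
  simp [hij]

lemma closure_transvection_one_eq_top (p : ℕ) [Fact p.Prime] :
    Subgroup.closure {transvection (zero_ne_one : (0 : Fin 2) ≠ 1) (1 : ZMod p),
      transvection (one_ne_zero : (1 : Fin 2) ≠ 0) (1 : ZMod p)} = ⊤ := by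
  refine eq_top_iff.2 fun A _ ↦ SL2.transvection_induction _ (fun i j hij c ↦ ?_)
    (fun _ _ ↦ mul_mem) A
  rw [← ZMod.natCast_zmod_val c, transvection_natCast]
  refine pow_mem (Subgroup.subset_closure ?_) _
  fin_cases i <;> fin_cases j <;> simp at hij ⊢

end Matrix.SpecialLinearGroup

lemma QuotientGroup.orderOf_mk_eq_prime_pow {G : Type*} [Group G] {N : Subgroup G} [N.Normal]
    {g : G} {p k : ℕ} [Fact p.Prime] (hk : g ^ p ^ k ∉ N) (hk_succ : g ^ p ^ (k + 1) ∈ N) :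
    orderOf (g : G ⧸ N) = p ^ (k + 1) := by
  refine orderOf_eq_prime_pow ?_ ?_ <;> rw [← QuotientGroup.mk_pow, QuotientGroup.eq_one_iff]
  exacts [hk, hk_succ]

lemma T742.exists_hom {G : Type*} [Group G] {x y : G} (hx : x ^ 7 = 1) (hy : y ^ 4 = 1)
    (hxy : (x * y) ^ 2 = 1) :
    ∃ φ : T742 →* G, φ (.of 0) = x ∧ φ (.of 1) = y ∧ φ (.of 2) = (x * y)⁻¹ := by
  have hrels : ∀ r ∈ rels742, FreeGroup.lift ![x, y, (x * y)⁻¹] r = 1 := by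
    rintro r (rfl | rfl | rfl | rfl) <;> simp [hx, hy, hxy, -_root_.mul_inv_rev]
  exact ⟨PresentedGroup.toGroup hrels, PresentedGroup.toGroup.of hrels,
    PresentedGroup.toGroup.of hrels, PresentedGroup.toGroup.of hrels⟩

namespace PSL27

instance : Fact (Nat.Prime 7) := ⟨by norm_num⟩

abbrev upperTransvection : SL(2, ZMod 7) :=
  SpecialLinearGroup.transvection (zero_ne_one : (0 : Fin 2) ≠ 1) 1

/-- Chosen with `y e₀ ∈ span {e₁}`, so that `y` conjugates `u = upperTransvection` into a lower
transvection; with `tr y = 3`, a square root of `2`, so that `y ^ 4 = -1`; and with `tr (u y) = 0`,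
so that `(u y) ^ 2 = -1`. -/
def liftC₂ : SL(2, ZMod 7) := ⟨!![0, 5; 4, 3], by decide⟩

lemma liftC₂_pow_four : liftC₂ ^ 4 = -1 := by decide

lemma upperTransvection_mul_liftC₂_sq : (upperTransvection * liftC₂) ^ 2 = -1 := by decide

lemma liftC₂_conj_upperTransvection_pow_three :
    liftC₂ * upperTransvection ^ 3 * liftC₂⁻¹ =
      SpecialLinearGroup.transvection (one_ne_zero : (1 : Fin 2) ≠ 0) 1 := by
  rw [mul_inv_eq_iff_eq_mul]
  decide

lemma neg_one_mem_center : (-1 : SL(2, ZMod 7)) ∈ Subgroup.center SL(2, ZMod 7) :=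
  Subgroup.mem_center_iff.2 fun g ↦ by simp

lemma closure_upperTransvection_liftC₂_eq_top :
    Subgroup.closure {upperTransvection, liftC₂} = ⊤ := by
  have hu : upperTransvection ∈ Subgroup.closure {upperTransvection, liftC₂} :=
    Subgroup.subset_closure (by simp)
  have hy : liftC₂ ∈ Subgroup.closure {upperTransvection, liftC₂} :=
    Subgroup.subset_closure (by simp)
  rw [eq_top_iff, ← SpecialLinearGroup.closure_transvection_one_eq_top 7, Subgroup.closure_le]
  rintro g (rfl | rfl)
  · exact hu
  · rw [← liftC₂_conj_upperTransvection_pow_three]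
    exact mul_mem (mul_mem hy (pow_mem hu 3)) (inv_mem hy)

lemma closure_mk_upperTransvection_liftC₂_eq_top :
    Subgroup.closure {(QuotientGroup.mk upperTransvection : PSL27), QuotientGroup.mk liftC₂} =
      ⊤ := by
  have := congrArg (Subgroup.map (QuotientGroup.mk' (Subgroup.center SL(2, ZMod 7))))
    closure_upperTransvection_liftC₂_eq_top
  rwa [MonoidHom.map_closure, Set.image_pair,
    Subgroup.map_top_of_surjective _ (QuotientGroup.mk'_surjective _)] at this

lemma orderOf_mk_upperTransvection : orderOf (QuotientGroup.mk upperTransvection : PSL27) = 7 := by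
  refine QuotientGroup.orderOf_mk_eq_prime_pow (p := 7) (k := 0) ?_ ?_
  · simp [SpecialLinearGroup.transvection_mem_center_iff]
  · rw [zero_add, pow_one, ← SpecialLinearGroup.transvection_natCast, ZMod.natCast_self,
      SpecialLinearGroup.transvection_coeff_zero]
    exact one_mem _

lemma orderOf_mk_liftC₂ : orderOf (QuotientGroup.mk liftC₂ : PSL27) = 4 := by
  refine QuotientGroup.orderOf_mk_eq_prime_pow (p := 2) (k := 1) ?_ ?_
  · exact fun h ↦ absurd (SpecialLinearGroup.apply_eq_zero_of_mem_center h zero_ne_one) (by decide)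
  · simpa [liftC₂_pow_four] using neg_one_mem_center

lemma orderOf_mk_upperTransvection_mul_mk_liftC₂ :
    orderOf ((QuotientGroup.mk upperTransvection : PSL27) * QuotientGroup.mk liftC₂) = 2 := by
  rw [← QuotientGroup.mk_mul]
  refine QuotientGroup.orderOf_mk_eq_prime_pow (p := 2) (k := 0) ?_ ?_
  · exact fun h ↦ absurd (SpecialLinearGroup.apply_eq_zero_of_mem_center h zero_ne_one) (by decide)
  · simpa [upperTransvection_mul_liftC₂_sq] using neg_one_mem_center

end PSL27

/-- There is a surjective homomorphism `𝕋(7,4,2) → PSL(2,7)` sending the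
generators `c₁, c₂, c₃` to elements of orders exactly `7, 4, 2`
(an appropriate orbifold homomorphism). -/
theorem exists_appropriate_orbifold_hom_742 :
    ∃ φ : T742 →* PSL27, Function.Surjective φ ∧
      orderOf (φ (PresentedGroup.of 0)) = 7 ∧
      orderOf (φ (PresentedGroup.of 1)) = 4 ∧
      orderOf (φ (PresentedGroup.of 2)) = 2 := by
  open PSL27 in
  obtain ⟨φ, h₀, h₁, h₂⟩ := T742.exists_hom (x := (QuotientGroup.mk upperTransvection : PSL27))
    (y := QuotientGroup.mk liftC₂)
    (orderOf_dvd_iff_pow_eq_one.1 orderOf_mk_upperTransvection.dvd)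
    (orderOf_dvd_iff_pow_eq_one.1 orderOf_mk_liftC₂.dvd)
    (orderOf_dvd_iff_pow_eq_one.1 orderOf_mk_upperTransvection_mul_mk_liftC₂.dvd)
  refine ⟨φ, ?_, ?_, ?_, ?_⟩
  · rw [← MonoidHom.range_eq_top, eq_top_iff, ← PSL27.closure_mk_upperTransvection_liftC₂_eq_top,
      Subgroup.closure_le]
    rintro g (rfl | rfl)
    exacts [⟨_, h₀⟩, ⟨_, h₁⟩]
  · rw [h₀, PSL27.orderOf_mk_upperTransvection]
  · rw [h₁, PSL27.orderOf_mk_liftC₂]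
  · rw [h₂, orderOf_inv, PSL27.orderOf_mk_upperTransvection_mul_mk_liftC₂]
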